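/- arXiv:2001.06861 — 5 statements merged into one kernel-verified Lean document; each statement's English description precedes it below -/
import Mathlib

section
/- Let I = I(C) be the edge ideal of a clutter C. If A is a stable set of C whose neighbor set N_C(A) is a minimal vertex cover of C, and t_A = ∏_{t_i ∈ A} t_i, then the colon ideal (I : t_A) equals the ideal of S generated by the variables in N_C(A). -/
open MvPolynomial

attribute [local instance] Classical.propDecidable

/-- The v-number of a graded ideal `I` of a polynomial ring: the least `d ≥ 1` such that
there is a homogeneous polynomial `f` of degree `d` and an associated prime `p` of `S/I`
with `(I : f) = p`; by convention it is `0` when `I` is the ideal generated by the variables. -/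
noncomputable def vNumber {K : Type*} [Field K] {σ : Type*}
    (I : Ideal (MvPolynomial σ K)) : ℕ :=
  if I = Ideal.span (Set.range (X : σ → MvPolynomial σ K)) then 0
  else sInf {d : ℕ | 1 ≤ d ∧ ∃ f : MvPolynomial σ K, f.IsHomogeneous d ∧
    ∃ p ∈ associatedPrimes (MvPolynomial σ K) (MvPolynomial σ K ⧸ I),
      Submodule.colon I (Ideal.span {f}) = p}

/-- A squarefree monomial ideal: an ideal generated by squarefree monomials,
i.e. by products of distinct variables. -/
def IsSquarefreeMonomialIdeal {K : Type*} [Field K] {σ : Type*}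
    (I : Ideal (MvPolynomial σ K)) : Prop :=
  ∃ E : Set (Finset σ), I = Ideal.span ((fun e : Finset σ => ∏ i ∈ e, X i) '' E)

/-- A clutter on the vertex set `Fin s`: a family of edges, none of which contains another. -/
structure Clutter (s : ℕ) where
  edges : Finset (Finset (Fin s))
  antichain : ∀ e ∈ edges, ∀ f ∈ edges, e ⊆ f → e = f

namespace Clutter

variable {s : ℕ} (C : Clutter s)

/-- The edge ideal of a clutter. -/
noncomputable def edgeIdeal (K : Type*) [Field K] : Ideal (MvPolynomial (Fin s) K) :=
  Ideal.span ((fun e : Finset (Fin s) => ∏ i ∈ e, X i) '' C.edges)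

/-- A stable (independent) set of a clutter: a set of vertices containing no edge. -/
def Stable (A : Finset (Fin s)) : Prop := ∀ e ∈ C.edges, ¬ (e ⊆ A)

/-- A maximal stable set of a clutter. -/
def MaximalStable (A : Finset (Fin s)) : Prop :=
  C.Stable A ∧ ∀ B : Finset (Fin s), C.Stable B → A ⊆ B → A = B

/-- The neighbor set `N_C(A)`: all vertices `i` such that `{i} ∪ A` contains an edge. -/
noncomputable def neighborSet (A : Finset (Fin s)) : Finset (Fin s) :=
  Finset.univ.filter (fun i => ∃ e ∈ C.edges, e ⊆ insert i A)

/-- A vertex cover of a clutter: a set of vertices meeting every edge. -/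
def IsVertexCover (B : Finset (Fin s)) : Prop := ∀ e ∈ C.edges, ∃ i ∈ e, i ∈ B

/-- A minimal vertex cover: a vertex cover minimal with respect to inclusion. -/
def IsMinimalVertexCover (B : Finset (Fin s)) : Prop :=
  C.IsVertexCover B ∧ ∀ B' ⊂ B, ¬ C.IsVertexCover B'

/-- The independence number `β₀(C)`: the maximum size of a stable set. -/
noncomputable def indepNum : ℕ := sSup {n : ℕ | ∃ A : Finset (Fin s), C.Stable A ∧ A.card = n}

/-- The independent domination number `i(C)`: the minimum size of a maximal stable set. -/
noncomputable def idomNum : ℕ :=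
  sInf {n : ℕ | ∃ A : Finset (Fin s), C.MaximalStable A ∧ A.card = n}

/-- The vertex covering number `α₀(C)`: the minimum size of a vertex cover. -/
noncomputable def coverNum : ℕ :=
  sInf {n : ℕ | ∃ B : Finset (Fin s), C.IsVertexCover B ∧ B.card = n}

/-- The ideal of covers of a clutter, generated by the monomials of the minimal vertex covers. -/
noncomputable def coverIdeal (K : Type*) [Field K] : Ideal (MvPolynomial (Fin s) K) :=
  Ideal.span ((fun B : Finset (Fin s) => ∏ i ∈ B, X i) '' {B | C.IsMinimalVertexCover B})

/-- The clutter is well-covered if every maximal stable set has maximum cardinality `β₀(C)`. -/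
def WellCovered : Prop := ∀ A : Finset (Fin s), C.MaximalStable A → A.card = C.indepNum

/-- Deletion of an edge from a clutter. -/
def deleteEdge (e : Finset (Fin s)) : Clutter s :=
  ⟨C.edges.erase e, fun a ha b hb hab =>
    C.antichain a (Finset.mem_of_mem_erase ha) b (Finset.mem_of_mem_erase hb) hab⟩

/-- An edge-critical clutter: deleting any edge increases the independence number. -/
def EdgeCritical : Prop := ∀ e ∈ C.edges, C.indepNum < (C.deleteEdge e).indepNum

end Clutter

section Graphs

variable {V : Type*}

/-- The edge ideal of a simple graph. -/
noncomputable def gEdgeIdeal (K : Type*) [Field K] (G : SimpleGraph V) :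
    Ideal (MvPolynomial V K) :=
  Ideal.span {m : MvPolynomial V K | ∃ i j : V, G.Adj i j ∧ m = X i * X j}

/-- A stable (independent) set of vertices of a graph. -/
def gStable (G : SimpleGraph V) (A : Finset V) : Prop := ∀ i ∈ A, ∀ j ∈ A, ¬ G.Adj i j

/-- A maximal stable set of a graph. -/
def gMaximalStable (G : SimpleGraph V) (A : Finset V) : Prop :=
  gStable G A ∧ ∀ B : Finset V, gStable G B → A ⊆ B → A = B

/-- The independence number `β₀(G)`. -/
noncomputable def gIndepNum [Fintype V] (G : SimpleGraph V) : ℕ :=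
  sSup {n : ℕ | ∃ A : Finset V, gStable G A ∧ A.card = n}

/-- A maximum stable set: a stable set of maximum cardinality `β₀(G)`. -/
def gMaximumStable [Fintype V] (G : SimpleGraph V) (A : Finset V) : Prop :=
  gStable G A ∧ A.card = gIndepNum G

/-- The independent domination number `i(G)`: minimum size of a maximal stable set. -/
noncomputable def gIdomNum (G : SimpleGraph V) : ℕ :=
  sInf {n : ℕ | ∃ A : Finset V, gMaximalStable G A ∧ A.card = n}

/-- A well-covered graph: every maximal stable set is a maximum stable set. -/
def gWellCovered [Fintype V] (G : SimpleGraph V) : Prop :=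
  ∀ A : Finset V, gMaximalStable G A → A.card = gIndepNum G

/-- The class `W₂`: graphs with at least two vertices in which any two disjoint stable sets
are contained in two disjoint maximum stable sets. -/
def W2 [Fintype V] (G : SimpleGraph V) : Prop :=
  2 ≤ Fintype.card V ∧ ∀ A B : Finset V, gStable G A → gStable G B → Disjoint A B →
    ∃ A' B' : Finset V, gMaximumStable G A' ∧ gMaximumStable G B' ∧ Disjoint A' B' ∧
      A ⊆ A' ∧ B ⊆ B'

/-- The neighbor set of a set of vertices of a graph: all vertices adjacent to a vertex of `A`. -/
noncomputable def gNeighborSet [Fintype V] (G : SimpleGraph V) (A : Finset V) : Finset V :=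
  Finset.univ.filter (fun i => ∃ j ∈ A, G.Adj i j)

/-- A vertex cover of a graph. -/
def gIsVertexCover (G : SimpleGraph V) (B : Finset V) : Prop :=
  ∀ i j : V, G.Adj i j → i ∈ B ∨ j ∈ B

/-- A minimal vertex cover of a graph. -/
def gIsMinimalVertexCover (G : SimpleGraph V) (B : Finset V) : Prop :=
  gIsVertexCover G B ∧ ∀ B' ⊂ B, ¬ gIsVertexCover G B'

/-- An edge-critical graph: deleting any edge increases the independence number. -/
def gEdgeCritical [Fintype V] (G : SimpleGraph V) : Prop :=
  ∀ i j : V, G.Adj i j → gIndepNum G < gIndepNum (G.deleteEdges {s(i, j)})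

end Graphs

/-- If `A` is a stable set of a clutter `C` whose neighbor set is a minimal vertex
cover, then `(I(C) : t_A)` is the ideal generated by the variables in `N_C(A)`. -/
theorem colon_monomial_eq_span_neighborSet {K : Type*} [Field K] {s : ℕ}
    (C : Clutter s) (A : Finset (Fin s)) (hA : C.Stable A)
    (hN : C.IsMinimalVertexCover (C.neighborSet A)) :
    Submodule.colon (C.edgeIdeal K)
      ((Ideal.span {∏ i ∈ A, X i} : Ideal (MvPolynomial (Fin s) K)) : Set (MvPolynomial (Fin s) K)) =
      Ideal.span ((fun i => (X i : MvPolynomial (Fin s) K)) '' ↑(C.neighborSet A)) := by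
  classical
  -- no neighbor of A lies in A, since A is stable
  have hAN : ∀ i ∈ C.neighborSet A, i ∉ A := by
    intro i hi hiA
    simp only [Clutter.neighborSet, Finset.mem_filter] at hi
    obtain ⟨-, e, he, hsub⟩ := hi
    exact hA e he (by rwa [Finset.insert_eq_self.2 hiA] at hsub)
  set d : Finset (Fin s) → (Fin s →₀ ℕ) := fun e => ∑ i ∈ e, Finsupp.single i 1 with hd
  have hdapp : ∀ (e : Finset (Fin s)) (j : Fin s), d e j = if j ∈ e then 1 else 0 := by
    intro e j
    rw [hd]
    simp only [Finset.sum_apply', Finsupp.single_apply]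
    rw [Finset.sum_ite_eq' e j (fun _ => 1)]
  have hmon : ∀ e : Finset (Fin s),
      (∏ i ∈ e, X i : MvPolynomial (Fin s) K) = monomial (d e) 1 := by
    intro e
    rw [hd, monomial_sum_one]
    exact Finset.prod_congr rfl fun i _ => (X_pow_eq_monomial).symm.trans (pow_one _)
  have hI : C.edgeIdeal K =
      Ideal.span ((fun m => monomial m (1 : K)) '' (d '' ↑C.edges)) := by
    rw [Clutter.edgeIdeal, ← Set.image_comp]
    congr 1
    exact Set.image_congr fun e _ => hmon e
  ext f
  rw [Ideal.mem_colon_span_singleton, hI, mem_ideal_span_monomial_image,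
    show ((fun i => (X i : MvPolynomial (Fin s) K)) '' ↑(C.neighborSet A))
      = (X '' ↑(C.neighborSet A)) from rfl,
    mem_ideal_span_X_image]
  have hsupp : (f * ∏ i ∈ A, X i).support
      = f.support.map (addRightEmbedding (d A)) := by
    rw [hmon A, ← single_eq_monomial]
    exact AddMonoidAlgebra.support_coeff_mul_single f 1 (by simp) _
  rw [hsupp]
  constructor
  · intro h m hm
    obtain ⟨si, hsi, hle⟩ := h (m + d A)
      (Finset.mem_map.2 ⟨m, hm, rfl⟩)
    obtain ⟨e, he, rfl⟩ := hsi
    obtain ⟨i, hie, hiN⟩ := hN.1 e he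
    refine ⟨i, Finset.mem_coe.2 hiN, ?_⟩
    have h1 := hle i
    rw [Finsupp.add_apply, hdapp, hdapp, if_pos hie, if_neg (hAN i hiN)] at h1
    omega
  · intro h xi hxi
    obtain ⟨m, hm, rfl⟩ := Finset.mem_map.1 hxi
    obtain ⟨i, hiN, hmi⟩ := h m hm
    have hiN' : i ∈ C.neighborSet A := Finset.mem_coe.1 hiN
    simp only [Clutter.neighborSet, Finset.mem_filter] at hiN'
    obtain ⟨-, e, he, hsub⟩ := hiN'
    refine ⟨d e, ⟨e, he, rfl⟩, ?_⟩
    intro j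
    show d e j ≤ (addRightEmbedding (d A)) m j
    have : (addRightEmbedding (d A)) m = m + d A := rfl
    rw [this, Finsupp.add_apply, hdapp, hdapp]
    by_cases hje : j ∈ e
    · rw [if_pos hje]
      rcases Finset.mem_insert.1 (hsub hje) with hji | hjA
      · subst hji; omega
      · rw [if_pos hjA]; omega
    · rw [if_neg hje]; omega
end

section
/- Let I = I(C) be the edge ideal of a clutter C and assume I is not a prime ideal. Then every maximal stable set of C belongs to A_C (i.e., F_C ⊆ A_C), and v(I) = min{ |A| : A ∈ A_C }. -/
open MvPolynomial

attribute [local instance] Classical.propDecidable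

/-!
A stable set `A` whose neighbour set covers `C` gives `(I : x_A) = (X i : i ∈ N_C(A))`, because
`x_i x_A ∈ I` exactly when `{i} ∪ A` contains an edge; this is a witness of degree `|A|`
(`A ≠ ∅`, since otherwise `I` itself would be this prime). Conversely, a prime `(I : f)` is
`(X i : i ∈ B)` for a minimal cover `B`, and since `I` is a monomial ideal one monomial `x^a`
of `f` already has `(I : x^a) = (X i : i ∈ B)`; then `supp a` is stable with neighbour set `B`,
and `|supp a| ≤ deg f`. A maximal stable set `A` has `N_C(A) = Aᶜ`, a vertex cover, and for a
stable set a neighbour set that covers `C` is automatically a minimal cover.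
-/

theorem Nat.sInf_eq_of_subset_of_forall_exists_le {S T : Set ℕ} (hST : S ⊆ T)
    (hT : ∀ t ∈ T, ∃ s ∈ S, s ≤ t) : sInf T = sInf S := by
  rcases S.eq_empty_or_nonempty with rfl | hS
  · have hT' : T = ∅ := Set.eq_empty_of_forall_notMem fun t ht => by simpa using hT t ht
    rw [hT']
  · obtain ⟨s, hs, hle⟩ := hT _ (Nat.sInf_mem (hS.mono hST))
    exact le_antisymm (Nat.sInf_le (hST (Nat.sInf_mem hS))) ((Nat.sInf_le hs).trans hle)

theorem Finsupp.card_support_le_degree {σ : Type*} (a : σ →₀ ℕ) : a.support.card ≤ a.degree := by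
  rw [Finset.card_eq_sum_ones, degree_apply]
  exact Finset.sum_le_sum fun i hi => Nat.one_le_iff_ne_zero.mpr (mem_support_iff.mp hi)

theorem Finsupp.indicator_one_le_iff {σ : Type*} {t : Finset σ} {m : σ →₀ ℕ} :
    indicator t (fun _ _ => 1) ≤ m ↔ t ⊆ m.support := by
  refine ⟨fun h i hi => ?_, fun h i => ?_⟩
  · have := h i
    rw [indicator_of_mem hi] at this
    exact mem_support_iff.mpr (by omega)
  · by_cases hi : i ∈ t
    · rw [indicator_of_mem hi]
      exact Nat.one_le_iff_ne_zero.mpr (mem_support_iff.mp (h hi))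
    · rw [indicator_of_notMem hi]
      exact Nat.zero_le _

theorem Finsupp.support_indicator_one {σ : Type*} (t : Finset σ) :
    (indicator t fun _ _ => (1 : ℕ)).support = t := by
  ext i
  by_cases hi : i ∈ t <;> simp [hi]

namespace Ideal

variable {R : Type*} [CommRing R]

theorem mem_associatedPrimes_of_colon_eq {I p : Ideal R} {f : R} (hp : p.IsPrime)
    (h : I.colon (span {f}) = p) : p ∈ associatedPrimes R (R ⧸ I) := by
  have hcolon : (⊥ : Submodule R (R ⧸ I)).colon {Submodule.Quotient.mk f} = p := by
    ext r
    rw [← h, Submodule.mem_colon_singleton, Submodule.mem_bot, ← Submodule.Quotient.mk_smul,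
      Submodule.Quotient.mk_eq_zero, smul_eq_mul, mem_colon_span_singleton]
  exact ⟨hp, _, by rw [hcolon, hp.radical]⟩

theorem exists_colon_le_of_colon_sum_le {ι : Type*} {I P : Ideal R} (hP : P.IsPrime)
    {s : Finset ι} {c x : ι → R} (h : I.colon (span {∑ i ∈ s, c i * x i}) ≤ P) :
    ∃ i ∈ s, I.colon (span {x i}) ≤ P := by
  have hinf : s.inf (fun i => I.colon (span {x i})) ≤ I.colon (span {∑ i ∈ s, c i * x i}) := by
    intro r hr
    rw [mem_colon_span_singleton, Finset.mul_sum]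
    refine sum_mem _ fun i hi => ?_
    rw [mul_left_comm]
    exact mul_mem_left _ _ (mem_colon_span_singleton.mp (Submodule.mem_finsetInf.mp hr i hi))
  exact hP.inf_le'.mp (hinf.trans h)

end Ideal

namespace MvPolynomial

variable {σ R : Type*}

theorem prod_X_eq_monomial_indicator [CommSemiring R] (t : Finset σ) :
    ∏ i ∈ t, (X i : MvPolynomial σ R) = monomial (Finsupp.indicator t fun _ _ => 1) 1 := by
  simpa using prod_X_pow (R := R) (fun _ => 1) t

theorem X_mem_ideal_span_X_image_iff [CommSemiring R] [Nontrivial R] {s : Set σ} {i : σ} :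
    (X i : MvPolynomial σ R) ∈ Ideal.span (X '' s) ↔ i ∈ s := by
  rw [mem_ideal_span_X_image]
  simp [support_X, Finsupp.single_apply]

theorem ideal_span_X_image_le_iff [CommSemiring R] [Nontrivial R] {s t : Set σ} :
    Ideal.span (X '' s : Set (MvPolynomial σ R)) ≤ Ideal.span (X '' t) ↔ s ⊆ t := by
  rw [Ideal.span_le, Set.image_subset_iff]
  exact ⟨fun h i hi => X_mem_ideal_span_X_image_iff.mp (h hi),
    fun h i hi => X_mem_ideal_span_X_image_iff.mpr (h hi)⟩

theorem isPrime_ideal_span_X_image [CommRing R] [IsDomain R] (s : Set σ) :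
    (Ideal.span (X '' s : Set (MvPolynomial σ R))).IsPrime := by
  classical
  set P : Ideal (MvPolynomial σ R) := Ideal.span (X '' s)
  set φ : MvPolynomial σ R →ₐ[R] MvPolynomial σ R := aeval fun i => if i ∈ s then 0 else X i
  suffices P = RingHom.ker φ by rw [this]; exact RingHom.ker_isPrime _
  refine le_antisymm ?_ fun g hg => ?_
  · rw [Ideal.span_le]
    rintro _ ⟨i, hi, rfl⟩
    simp [φ, hi]
  · -- `φ` only kills variables that already vanish modulo `P`
    have hφ : (Ideal.Quotient.mkₐ R P).comp φ = Ideal.Quotient.mkₐ R P := by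
      ext i
      by_cases hi : i ∈ s
      · simp only [φ, AlgHom.comp_apply, aeval_X, hi, if_true, map_zero]
        exact (Ideal.Quotient.eq_zero_iff_mem.mpr
          (Ideal.subset_span (Set.mem_image_of_mem X hi))).symm
      · simp [φ, hi]
    rw [← Ideal.Quotient.eq_zero_iff_mem, ← Ideal.Quotient.mkₐ_eq_mk R, ← hφ, AlgHom.comp_apply,
      RingHom.mem_ker.mp hg, map_zero]

end MvPolynomial

namespace Clutter

variable {s : ℕ} {C : Clutter s} {A B : Finset (Fin s)}

theorem not_stable_iff : ¬ C.Stable A ↔ ∃ e ∈ C.edges, e ⊆ A := by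
  simp [Stable]

theorem mem_neighborSet_iff {i : Fin s} : i ∈ C.neighborSet A ↔ ¬ C.Stable (insert i A) := by
  simp [neighborSet, not_stable_iff]

theorem Stable.disjoint_neighborSet (hA : C.Stable A) : Disjoint (C.neighborSet A) A :=
  Finset.disjoint_left.mpr fun i hi hiA =>
    mem_neighborSet_iff.mp hi (by rwa [Finset.insert_eq_of_mem hiA])

theorem Stable.isVertexCover_compl (hA : C.Stable A) : C.IsVertexCover Aᶜ := fun e he => by
  obtain ⟨i, hie, hiA⟩ := Finset.not_subset.mp (hA e he)
  exact ⟨i, hie, Finset.mem_compl.mpr hiA⟩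

theorem exists_isMinimalVertexCover_subset (hB : C.IsVertexCover B) :
    ∃ B' ⊆ B, C.IsMinimalVertexCover B' := by
  obtain ⟨B', hB'B, hmin⟩ := exists_minimal_le_of_wellFoundedLT C.IsVertexCover B hB
  exact ⟨B', hB'B, (minimal_iff_forall_lt.mp hmin).1, (minimal_iff_forall_lt.mp hmin).2⟩

theorem IsMinimalVertexCover.eq_of_subset (hB : C.IsMinimalVertexCover B)
    (hA : C.IsVertexCover A) (h : A ⊆ B) : A = B := by
  by_contra hne
  exact hB.2 A (Finset.ssubset_iff_subset_ne.mpr ⟨h, hne⟩) hA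

/-- Any cover inside `N_C(A)` must contain, for each `j ∈ N_C(A)`, a vertex of an edge inside
`{j} ∪ A`, and the only candidate outside the stable set `A` is `j` itself. -/
theorem Stable.isMinimalVertexCover_neighborSet (hA : C.Stable A)
    (hN : C.IsVertexCover (C.neighborSet A)) : C.IsMinimalVertexCover (C.neighborSet A) := by
  refine ⟨hN, fun B' hB' hcov => ?_⟩
  obtain ⟨j, hjN, hjB'⟩ := Finset.exists_of_ssubset hB'
  obtain ⟨e, he, hejA⟩ := not_stable_iff.mp (mem_neighborSet_iff.mp hjN)
  obtain ⟨k, hke, hkB'⟩ := hcov e he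
  rcases Finset.mem_insert.mp (hejA hke) with rfl | hkA
  · exact hjB' hkB'
  · exact Finset.disjoint_left.mp hA.disjoint_neighborSet (hB'.subset hkB') hkA

theorem MaximalStable.neighborSet_eq_compl (hA : C.MaximalStable A) : C.neighborSet A = Aᶜ := by
  refine Finset.Subset.antisymm (fun i hi => Finset.mem_compl.mpr
    (Finset.disjoint_left.mp hA.1.disjoint_neighborSet hi)) fun i hi => ?_
  rw [mem_neighborSet_iff]
  intro hst
  exact Finset.mem_compl.mp hi (hA.2 _ hst (Finset.subset_insert i A) ▸ Finset.mem_insert_self i A)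

theorem MaximalStable.isMinimalVertexCover_neighborSet (hA : C.MaximalStable A) :
    C.IsMinimalVertexCover (C.neighborSet A) :=
  hA.1.isMinimalVertexCover_neighborSet (hA.neighborSet_eq_compl ▸ hA.1.isVertexCover_compl)

variable {K : Type*} [Field K]

theorem mem_edgeIdeal_iff {g : MvPolynomial (Fin s) K} :
    g ∈ C.edgeIdeal K ↔ ∀ m ∈ g.support, ¬ C.Stable m.support := by
  have hgen : (fun e : Finset (Fin s) => ∏ i ∈ e, (X i : MvPolynomial (Fin s) K)) =
      (fun d => monomial d 1) ∘ fun e => Finsupp.indicator e fun _ _ => 1 :=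
    funext prod_X_eq_monomial_indicator
  rw [edgeIdeal, hgen, Set.image_comp, mem_ideal_span_monomial_image]
  simp [not_stable_iff, Finsupp.indicator_one_le_iff]

theorem monomial_mem_edgeIdeal_iff {m : Fin s →₀ ℕ} :
    monomial m (1 : K) ∈ C.edgeIdeal K ↔ ¬ C.Stable m.support := by
  simp [mem_edgeIdeal_iff, support_monomial]

theorem monomial_mem_edgeIdeal_of_mem_support {g : MvPolynomial (Fin s) K} {m : Fin s →₀ ℕ}
    (hg : g ∈ C.edgeIdeal K) (hm : m ∈ g.support) : monomial m (1 : K) ∈ C.edgeIdeal K :=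
  monomial_mem_edgeIdeal_iff.mpr (mem_edgeIdeal_iff.mp hg m hm)

theorem X_mul_monomial_mem_edgeIdeal_iff {i : Fin s} {a : Fin s →₀ ℕ} :
    X i * monomial a (1 : K) ∈ C.edgeIdeal K ↔ i ∈ C.neighborSet a.support := by
  rw [← pow_one (X i), ← monomial_single_add, monomial_mem_edgeIdeal_iff, mem_neighborSet_iff,
    Finsupp.support_add_eq_union, Finsupp.support_single _ one_ne_zero,
    Finset.singleton_union]

theorem colon_monomial_eq {a : Fin s →₀ ℕ} (hA : C.Stable a.support)
    (hN : C.IsVertexCover (C.neighborSet a.support)) :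
    (C.edgeIdeal K).colon (Ideal.span {monomial a (1 : K)}) =
      Ideal.span (X '' (C.neighborSet a.support : Set (Fin s))) := by
  refine le_antisymm (fun g hg => ?_) ?_
  · rw [mem_ideal_span_X_image]
    intro m hm
    have hma : m + a ∈ (g * monomial a 1).support := by
      rw [mem_support_iff, coeff_mul_monomial, mul_one]
      exact mem_support_iff.mp hm
    obtain ⟨e, he, hema⟩ := not_stable_iff.mp
      (mem_edgeIdeal_iff.mp (Ideal.mem_colon_span_singleton.mp hg) _ hma)
    obtain ⟨i, hie, hiN⟩ := hN e he
    have hia : i ∉ a.support := Finset.disjoint_left.mp hA.disjoint_neighborSet hiN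
    have him : i ∈ m.support ∪ a.support := by
      rw [← Finsupp.support_add_eq_union]
      exact hema hie
    exact ⟨i, hiN, Finsupp.mem_support_iff.mp ((Finset.mem_union.mp him).resolve_right hia)⟩
  · rw [Ideal.span_le]
    rintro _ ⟨i, hi, rfl⟩
    exact Ideal.mem_colon_span_singleton.mpr (X_mul_monomial_mem_edgeIdeal_iff.mpr hi)

theorem colon_prod_X_eq (hA : C.Stable A) (hN : C.IsVertexCover (C.neighborSet A)) :
    (C.edgeIdeal K).colon (Ideal.span {∏ i ∈ A, (X i : MvPolynomial (Fin s) K)}) =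
      Ideal.span (X '' (C.neighborSet A : Set (Fin s))) := by
  have hsupp := Finsupp.support_indicator_one A
  rw [prod_X_eq_monomial_indicator, colon_monomial_eq (by rwa [hsupp]) (by rwa [hsupp]), hsupp]

theorem isPrime_edgeIdeal_of_stable_empty (hst : C.Stable ∅)
    (hN : C.IsVertexCover (C.neighborSet ∅)) : (C.edgeIdeal K).IsPrime := by
  have hcolon := colon_prod_X_eq (K := K) hst hN
  have hone :
      (C.edgeIdeal K).colon (Ideal.span {(1 : MvPolynomial (Fin s) K)}) = C.edgeIdeal K := by
    ext r
    rw [Ideal.mem_colon_span_singleton, mul_one]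
  rw [Finset.prod_empty, hone] at hcolon
  rw [hcolon]
  exact isPrime_ideal_span_X_image _

theorem edgeIdeal_le_span_X_image (hB : C.IsVertexCover B) :
    C.edgeIdeal K ≤ Ideal.span (X '' ↑B) := by
  rw [edgeIdeal, Ideal.span_le]
  rintro _ ⟨e, he, rfl⟩
  obtain ⟨i, hie, hiB⟩ := hB e he
  change ∏ j ∈ e, (X j : MvPolynomial (Fin s) K) ∈ _
  rw [← Finset.mul_prod_erase e _ hie]
  exact Ideal.mul_mem_right _ _ (Ideal.subset_span (Set.mem_image_of_mem X hiB))

theorem exists_isMinimalVertexCover_span_X_image_le {p : Ideal (MvPolynomial (Fin s) K)}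
    (hp : p.IsPrime) (hIp : C.edgeIdeal K ≤ p) :
    ∃ B, C.IsMinimalVertexCover B ∧ Ideal.span (X '' ↑B) ≤ p := by
  have hcov : C.IsVertexCover (Finset.univ.filter fun i => X i ∈ p) := fun e he => by
    have hprod : ∏ i ∈ e, X i ∈ p := hIp (Ideal.subset_span ⟨e, he, rfl⟩)
    obtain ⟨i, hie, hip⟩ := hp.prod_mem_iff.mp hprod
    exact ⟨i, hie, Finset.mem_filter.mpr ⟨Finset.mem_univ i, hip⟩⟩
  obtain ⟨B, hBsub, hB⟩ := exists_isMinimalVertexCover_subset hcov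
  refine ⟨B, hB, Ideal.span_le.mpr ?_⟩
  rintro _ ⟨i, hi, rfl⟩
  exact (Finset.mem_filter.mp (hBsub hi)).2

theorem exists_isMinimalVertexCover_notMem_span_X_image {f : MvPolynomial (Fin s) K}
    (hf : f ∉ C.edgeIdeal K) : ∃ B, C.IsMinimalVertexCover B ∧ f ∉ Ideal.span (X '' ↑B) := by
  obtain ⟨m, hm, hst⟩ : ∃ m ∈ f.support, C.Stable m.support := by
    simpa [mem_edgeIdeal_iff] using hf
  obtain ⟨B, hBsub, hB⟩ := exists_isMinimalVertexCover_subset hst.isVertexCover_compl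
  refine ⟨B, hB, fun hfB => ?_⟩
  obtain ⟨i, hiB, hmi⟩ := mem_ideal_span_X_image.mp hfB m hm
  exact Finset.mem_compl.mp (hBsub hiB) (Finsupp.mem_support_iff.mpr hmi)

/-- `I ≤ p` bounds `p` from below by some `(X i : i ∈ B')`, and a minimal cover `B` with
`f ∉ (X i : i ∈ B)` bounds `(I : f)` from above by `(X i : i ∈ B)`; minimality of `B` forces
`B' = B`. -/
theorem exists_isMinimalVertexCover_eq_of_colon_eq {f : MvPolynomial (Fin s) K}
    {p : Ideal (MvPolynomial (Fin s) K)} (hp : p.IsPrime)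
    (h : (C.edgeIdeal K).colon (Ideal.span {f}) = p) :
    ∃ B, C.IsMinimalVertexCover B ∧ p = Ideal.span (X '' ↑B) := by
  have hfI : f ∉ C.edgeIdeal K := fun hf =>
    hp.ne_top (h ▸ (Ideal.eq_top_iff_one _).mpr (Ideal.mem_colon_span_singleton.mpr (by simpa)))
  obtain ⟨B, hB, hfB⟩ := exists_isMinimalVertexCover_notMem_span_X_image hfI
  obtain ⟨B', hB', hB'p⟩ :=
    exists_isMinimalVertexCover_span_X_image_le hp (h ▸ Ideal.le_colon)
  have hpB : p ≤ Ideal.span (X '' ↑B) := fun r hr =>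
    ((isPrime_ideal_span_X_image _).mem_or_mem (edgeIdeal_le_span_X_image hB.1
      (Ideal.mem_colon_span_singleton.mp (h ▸ hr)))).resolve_right hfB
  have hB'B : B' = B :=
    hB.eq_of_subset hB'.1 (by exact_mod_cast ideal_span_X_image_le_iff.mp (hB'p.trans hpB))
  exact ⟨B, hB, le_antisymm hpB (hB'B ▸ hB'p)⟩

/-- Every `(I : x^a)` with `a ∈ supp f` contains the variables of `(I : f)`, as `I` is a
monomial ideal; and `⋂ₐ (I : x^a) ⊆ (I : f)` with `(I : f)` prime puts one of them inside. -/
theorem exists_mem_support_colon_monomial_eq {f : MvPolynomial (Fin s) K}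
    (h : (C.edgeIdeal K).colon (Ideal.span {f}) = Ideal.span (X '' ↑B)) :
    ∃ a ∈ f.support,
      (C.edgeIdeal K).colon (Ideal.span {monomial a (1 : K)}) = Ideal.span (X '' ↑B) := by
  have hf : f = ∑ a ∈ f.support, MvPolynomial.C (coeff a f) * monomial a 1 := by
    simp only [C_mul_monomial, mul_one]
    exact as_sum f
  rw [hf] at h
  obtain ⟨a, ha, hle⟩ := Ideal.exists_colon_le_of_colon_sum_le (isPrime_ideal_span_X_image _) h.le
  rw [← hf] at h
  refine ⟨a, ha, le_antisymm hle (Ideal.span_le.mpr ?_)⟩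
  rintro _ ⟨i, hi, rfl⟩
  have hXf : X i * f ∈ C.edgeIdeal K :=
    Ideal.mem_colon_span_singleton.mp (h ▸ Ideal.subset_span (Set.mem_image_of_mem X hi))
  have hmem : Finsupp.single i 1 + a ∈ (X i * f).support := by
    rw [support_X_mul]
    exact Finset.mem_map_of_mem _ ha
  have hmono := monomial_mem_edgeIdeal_of_mem_support hXf hmem
  rw [monomial_single_add, pow_one] at hmono
  exact Ideal.mem_colon_span_singleton.mpr hmono

theorem stable_and_neighborSet_eq_of_colon_monomial_eq {a : Fin s →₀ ℕ}
    (h : (C.edgeIdeal K).colon (Ideal.span {monomial a (1 : K)}) = Ideal.span (X '' ↑B)) :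
    C.Stable a.support ∧ C.neighborSet a.support = B := by
  refine ⟨fun e he hea => (isPrime_ideal_span_X_image (R := K) (B : Set (Fin s))).ne_top ?_, ?_⟩
  · have ha : monomial a (1 : K) ∈ C.edgeIdeal K :=
      monomial_mem_edgeIdeal_iff.mpr (not_stable_iff.mpr ⟨e, he, hea⟩)
    exact h ▸ (Ideal.eq_top_iff_one _).mpr (Ideal.mem_colon_span_singleton.mpr (by simpa))
  · ext i
    rw [← X_mul_monomial_mem_edgeIdeal_iff (K := K), ← Ideal.mem_colon_span_singleton, h,
      X_mem_ideal_span_X_image_iff, Finset.mem_coe]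

theorem exists_mem_support_of_colon_eq {f : MvPolynomial (Fin s) K}
    {p : Ideal (MvPolynomial (Fin s) K)} (hp : p.IsPrime)
    (h : (C.edgeIdeal K).colon (Ideal.span {f}) = p) :
    ∃ a ∈ f.support, C.Stable a.support ∧ C.IsMinimalVertexCover (C.neighborSet a.support) := by
  obtain ⟨B, hB, rfl⟩ := exists_isMinimalVertexCover_eq_of_colon_eq hp h
  obtain ⟨a, ha, hcolon⟩ := exists_mem_support_colon_monomial_eq h
  obtain ⟨hA, hN⟩ := stable_and_neighborSet_eq_of_colon_monomial_eq hcolon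
  exact ⟨a, ha, hA, hN ▸ hB⟩

end Clutter

/-- For the edge ideal `I = I(C)` of a clutter `C`, `I` not prime:
every maximal stable set lies in `𝒜_C`, and `v(I)` is the minimum cardinality of a member
of `𝒜_C` (the stable sets whose neighbor set is a minimal vertex cover). -/
theorem vNumber_edgeIdeal_clutter {K : Type*} [Field K] {s : ℕ}
    (C : Clutter s) (hI : ¬ (C.edgeIdeal K).IsPrime) :
    (∀ A : Finset (Fin s), C.MaximalStable A →
      C.Stable A ∧ C.IsMinimalVertexCover (C.neighborSet A)) ∧
    vNumber (C.edgeIdeal K) = sInf {n : ℕ | ∃ A : Finset (Fin s),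
      (C.Stable A ∧ C.IsMinimalVertexCover (C.neighborSet A)) ∧ A.card = n} := by
  refine ⟨fun A hA => ⟨hA.1, hA.isMinimalVertexCover_neighborSet⟩, ?_⟩
  have hne : C.edgeIdeal K ≠ Ideal.span (Set.range X) := fun h =>
    hI (by rw [h, ← Set.image_univ]; exact isPrime_ideal_span_X_image _)
  rw [vNumber, if_neg hne]
  refine Nat.sInf_eq_of_subset_of_forall_exists_le ?_ ?_
  · rintro _ ⟨A, ⟨hA, hN⟩, rfl⟩
    have hcard : 1 ≤ A.card := Finset.card_pos.mpr <| Finset.nonempty_iff_ne_empty.mpr <| by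
      rintro rfl
      exact hI (Clutter.isPrime_edgeIdeal_of_stable_empty hA hN.1)
    have hcolon := Clutter.colon_prod_X_eq (K := K) hA hN.1
    refine ⟨hcard, ∏ i ∈ A, X i, ?_, _, Ideal.mem_associatedPrimes_of_colon_eq
      (isPrime_ideal_span_X_image _) hcolon, hcolon⟩
    simpa using IsHomogeneous.prod A (fun i => X i) (fun _ => 1) fun i _ => isHomogeneous_X K i
  · rintro d ⟨-, f, hf, p, hp, hcolon⟩
    obtain ⟨a, ha, hA, hN⟩ := Clutter.exists_mem_support_of_colon_eq hp.isPrime hcolon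
    refine ⟨_, ⟨a.support, ⟨hA, hN⟩, rfl⟩, ?_⟩
    rw [hf.degree_eq_sum_deg_support ha]
    exact a.card_support_le_degree
end

section
/- If C is a clutter whose edge ideal I(C) is not a prime ideal, then v(I(C)) ≤ i(C) ≤ β_0(C), where i(C) = min{ |A| : A a maximal stable set of C } is the independent domination number of C and β_0(C) = max{ |A| : A a stable set of C } is the independence number of C. -/
open MvPolynomial

attribute [local instance] Classical.propDecidable

/-! Let `A` be a maximal stable set and `f = ∏ i ∈ A, tᵢ`. Maximality puts `tⱼ f` in `I(C)` for
every `j ∉ A`, and stability of `A` shows that nothing outside `(tⱼ : j ∉ A)` multiplies `f` into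
`I(C)`. So `(I(C) : f)` is this prime ideal of variables, hence an associated prime of `S ⧸ I(C)`,
and `v(I(C)) ≤ deg f = |A|`; taking `|A| = i(C)` gives the first inequality. The degenerate
clutters (`∅` an edge, or `∅` maximal stable) have `I(C) = S` or `I(C) = (t₁, …, tₛ)`, where
`v = 0`. -/

namespace Finsupp

variable {σ : Type*}

theorem sum_single_one_apply (A : Finset σ) (j : σ) :
    (∑ i ∈ A, Finsupp.single i 1 : σ →₀ ℕ) j = if j ∈ A then 1 else 0 := by
  classical
  simp [finsetSum_apply, single_apply]

theorem sum_single_one_le_iff {A : Finset σ} {m : σ →₀ ℕ} :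
    ∑ i ∈ A, Finsupp.single i 1 ≤ m ↔ ∀ i ∈ A, m i ≠ 0 := by
  classical
  simp only [le_def, sum_single_one_apply]
  refine ⟨fun h i hi => ?_, fun h i => ?_⟩
  · simpa [hi, Nat.one_le_iff_ne_zero] using h i
  · split_ifs with hi
    · exact Nat.one_le_iff_ne_zero.mpr (h i hi)
    · exact Nat.zero_le _

end Finsupp

namespace MvPolynomial

variable {σ R : Type*}

section CommSemiring

variable [CommSemiring R]

theorem prod_X_eq_monomial (A : Finset σ) :
    (∏ i ∈ A, X i : MvPolynomial σ R) = monomial (∑ i ∈ A, Finsupp.single i 1) 1 :=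
  (monomial_sum_one A _).symm

theorem mem_span_prod_X_image_iff {E : Set (Finset σ)} {g : MvPolynomial σ R} :
    g ∈ Ideal.span ((fun e : Finset σ => ∏ i ∈ e, X i) '' E) ↔
      ∀ m ∈ g.support, ∃ e ∈ E, ∀ i ∈ e, m i ≠ 0 := by
  have himage : (fun e : Finset σ => ∏ i ∈ e, (X i : MvPolynomial σ R)) '' E =
      (fun m => monomial m (1 : R)) '' ((fun e => ∑ i ∈ e, Finsupp.single i 1) '' E) := by
    rw [Set.image_image]
    exact Set.image_congr fun e _ => prod_X_eq_monomial e
  simp_rw [himage, mem_ideal_span_monomial_image, Set.exists_mem_image,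
    Finsupp.sum_single_one_le_iff]

theorem prod_X_mem_span_prod_X_image {E : Set (Finset σ)} {e B : Finset σ} (he : e ∈ E)
    (heB : e ⊆ B) : ∏ i ∈ B, (X i : MvPolynomial σ R) ∈
      Ideal.span ((fun e : Finset σ => ∏ i ∈ e, X i) '' E) :=
  Ideal.mem_of_dvd _ (Finset.prod_dvd_prod_of_subset _ _ _ heB) (Ideal.subset_span ⟨e, he, rfl⟩)

end CommSemiring

theorem isPrime_span_X_image [CommRing R] [IsDomain R] (B : Set σ) :
    (Ideal.span (X '' B : Set (MvPolynomial σ R))).IsPrime := by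
  classical
  set J := Ideal.span (X '' B : Set (MvPolynomial σ R))
  let φ : MvPolynomial σ R →ₐ[R] MvPolynomial σ R := aeval fun i => if i ∈ B then 0 else X i
  -- `φ` kills the variables of `B`, which is the identity modulo `J`
  have hφ : (Ideal.Quotient.mkₐ R J).comp φ = Ideal.Quotient.mkₐ R J := by
    refine algHom_ext fun i => ?_
    by_cases hi : i ∈ B
    · have hXi : X i ∈ J := Ideal.subset_span ⟨i, hi, rfl⟩
      simpa [φ, hi, eq_comm (a := (0 : MvPolynomial σ R ⧸ J)),
        Ideal.Quotient.eq_zero_iff_mem]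
    · simp [φ, hi]
  have hker : J = RingHom.ker φ := by
    refine le_antisymm (Ideal.span_le.mpr ?_) fun g hg => ?_
    · rintro _ ⟨i, hi, rfl⟩
      simp [φ, hi]
    · rw [← Ideal.Quotient.eq_zero_iff_mem, ← Ideal.Quotient.mkₐ_eq_mk R, ← hφ,
        AlgHom.comp_apply, RingHom.mem_ker.mp hg, map_zero]
  rw [hker]
  exact RingHom.ker_isPrime φ

end MvPolynomial

theorem Ideal.colon_span_singleton_mem_associatedPrimes {R : Type*} [CommRing R] {I : Ideal R}
    {f : R} (h : (I.colon (Ideal.span {f})).IsPrime) :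
    I.colon (Ideal.span {f}) ∈ associatedPrimes R (R ⧸ I) := by
  refine ⟨h, Ideal.Quotient.mk I f, ?_⟩
  have hcolon : (⊥ : Submodule R (R ⧸ I)).colon {Ideal.Quotient.mk I f} =
      I.colon (Ideal.span {f}) := by
    ext r
    rw [Submodule.mem_colon_singleton, Submodule.mem_bot, Ideal.mem_colon_span_singleton,
      Algebra.smul_def, Ideal.Quotient.algebraMap_eq, ← map_mul, Ideal.Quotient.eq_zero_iff_mem]
  rw [hcolon, h.radical]

section vNumber

variable {K σ : Type*} [Field K]

theorem vNumber_le_of_isPrime_colon {I : Ideal (MvPolynomial σ K)} {f : MvPolynomial σ K}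
    {d : ℕ} (hd : 1 ≤ d) (hf : f.IsHomogeneous d) (hp : (I.colon (Ideal.span {f})).IsPrime) :
    vNumber I ≤ d := by
  unfold vNumber
  split_ifs
  · exact Nat.zero_le d
  · exact Nat.sInf_le ⟨hd, f, hf, _, Ideal.colon_span_singleton_mem_associatedPrimes hp, rfl⟩

theorem vNumber_top : vNumber (⊤ : Ideal (MvPolynomial σ K)) = 0 := by
  unfold vNumber
  split_ifs
  · rfl
  · -- `S ⧸ ⊤` has no associated primes, so this is the junk value `sInf ∅ = 0`
    convert Nat.sInf_empty
    refine Set.eq_empty_of_forall_notMem ?_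
    rintro d ⟨-, f, -, p, hp, -⟩
    exact not_isAssociatedPrime_of_subsingleton hp

theorem vNumber_span_range_X :
    vNumber (Ideal.span (Set.range (X : σ → MvPolynomial σ K))) = 0 :=
  if_pos rfl

end vNumber

namespace Clutter

variable {s : ℕ} (C : Clutter s) {A : Finset (Fin s)}

theorem exists_maximalStable_superset {A₀ : Finset (Fin s)} (h : C.Stable A₀) :
    ∃ A, C.MaximalStable A ∧ A₀ ⊆ A := by
  classical
  obtain ⟨A, hA, hmax⟩ := Finset.exists_max_image
    (Finset.univ.filter fun B => C.Stable B ∧ A₀ ⊆ B) Finset.card ⟨A₀, by simp [h]⟩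
  simp only [Finset.mem_filter, Finset.mem_univ, true_and] at hA hmax
  exact ⟨A, ⟨hA.1, fun B hB hAB =>
    Finset.eq_of_subset_of_card_le hAB (hmax B ⟨hB, hA.2.trans hAB⟩)⟩, hA.2⟩

theorem exists_maximalStable_card_eq_idomNum (h : C.Stable ∅) :
    ∃ A, C.MaximalStable A ∧ A.card = C.idomNum := by
  obtain ⟨A, hA, -⟩ := C.exists_maximalStable_superset h
  exact Nat.sInf_mem (s := {n | ∃ A, C.MaximalStable A ∧ A.card = n}) ⟨A.card, A, hA, rfl⟩

theorem card_le_indepNum (hA : C.Stable A) : A.card ≤ C.indepNum :=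
  le_csSup ⟨s, by rintro _ ⟨B, -, rfl⟩; simpa using B.card_le_univ⟩ ⟨A, hA, rfl⟩

theorem idomNum_le_indepNum : C.idomNum ≤ C.indepNum := by
  rcases Set.eq_empty_or_nonempty
    {n : ℕ | ∃ A : Finset (Fin s), C.MaximalStable A ∧ A.card = n} with h | h
  · rw [idomNum, h, Nat.sInf_empty]
    exact Nat.zero_le _
  · obtain ⟨A, hA, hcard⟩ := Nat.sInf_mem h
    rw [idomNum, ← hcard]
    exact C.card_le_indepNum hA.1

variable {C} in
theorem MaximalStable.exists_edge_subset_insert (hA : C.MaximalStable A)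
    {j : Fin s} (hj : j ∉ A) : ∃ e ∈ C.edges, e ⊆ insert j A := by
  by_contra! h
  exact hj (hA.2 _ h (Finset.subset_insert j A) ▸ Finset.mem_insert_self j A)

theorem edgeIdeal_eq_top_of_not_stable_empty (K : Type*) [Field K] (h : ¬ C.Stable ∅) :
    C.edgeIdeal K = ⊤ := by
  obtain ⟨e, he, hsub⟩ : ∃ e ∈ C.edges, e ⊆ ∅ := by
    simpa [Stable] using h
  rw [Finset.subset_empty.mp hsub] at he
  exact (Ideal.eq_top_iff_one _).mpr (Ideal.subset_span ⟨∅, he, Finset.prod_empty⟩)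

theorem edgeIdeal_eq_span_range_X (K : Type*) [Field K] (h : C.MaximalStable ∅) :
    C.edgeIdeal K = Ideal.span (Set.range X) := by
  refine le_antisymm (Ideal.span_le.mpr ?_) (Ideal.span_le.mpr ?_)
  · rintro _ ⟨e, he, rfl⟩
    obtain ⟨i, hi⟩ : e.Nonempty :=
      Finset.nonempty_iff_ne_empty.mpr fun h0 => h.1 e he (h0 ▸ subset_rfl)
    exact Ideal.mem_of_dvd _ (Finset.dvd_prod_of_mem _ hi) (Ideal.subset_span ⟨i, rfl⟩)
  · rintro _ ⟨i, rfl⟩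
    obtain ⟨e, he, hei⟩ := h.exists_edge_subset_insert (Finset.notMem_empty i)
    simpa [edgeIdeal] using prod_X_mem_span_prod_X_image (R := K) (E := C.edges) he hei

theorem colon_edgeIdeal_prod_X (K : Type*) [Field K] (hA : C.MaximalStable A) :
    (C.edgeIdeal K).colon (Ideal.span {(∏ i ∈ A, X i : MvPolynomial (Fin s) K)}) =
      Ideal.span (X '' {i | i ∉ A}) := by
  refine le_antisymm (fun g hg => ?_) (Ideal.span_le.mpr ?_)
  · -- a monomial `m` of `g` avoiding the variables outside `A` makes `m + 1_A` a monomial of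
    -- `g * ∏ i ∈ A, X i`, and an edge dividing it would lie in `A`
    rw [Ideal.mem_colon_span_singleton] at hg
    by_contra hgp
    obtain ⟨m, hm, hmA⟩ : ∃ m ∈ g.support, ∀ i ∉ A, m i = 0 := by
      simpa [mem_ideal_span_X_image] using hgp
    have hsupp : m + ∑ i ∈ A, Finsupp.single i 1 ∈ (g * ∏ i ∈ A, X i).support := by
      rw [mem_support_iff, prod_X_eq_monomial, coeff_mul_monomial, mul_one]
      exact mem_support_iff.mp hm
    obtain ⟨e, he, hem⟩ := mem_span_prod_X_image_iff.mp hg _ hsupp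
    refine hA.1 e he fun i hi => ?_
    by_contra hiA
    exact hem i hi <| by
      rw [Finsupp.add_apply, Finsupp.sum_single_one_apply, if_neg hiA, hmA i hiA]
  · rintro _ ⟨j, hj, rfl⟩
    obtain ⟨e, he, hsub⟩ := hA.exists_edge_subset_insert hj
    rw [SetLike.mem_coe, Ideal.mem_colon_span_singleton, ← Finset.prod_insert hj]
    exact prod_X_mem_span_prod_X_image he hsub

theorem vNumber_edgeIdeal_le_card (K : Type*) [Field K] (hA : C.MaximalStable A) :
    vNumber (C.edgeIdeal K) ≤ A.card := by
  rcases A.eq_empty_or_nonempty with rfl | hne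
  · rw [C.edgeIdeal_eq_span_range_X K hA, vNumber_span_range_X]
    exact Nat.zero_le _
  · have hf : (∏ i ∈ A, X i : MvPolynomial (Fin s) K).IsHomogeneous A.card := by
      simpa using IsHomogeneous.prod A (fun i => X i) (fun _ => 1) fun i _ => isHomogeneous_X K i
    refine vNumber_le_of_isPrime_colon hne.card_pos hf ?_
    rw [C.colon_edgeIdeal_prod_X K hA]
    exact isPrime_span_X_image _

theorem vNumber_edgeIdeal_le_idomNum (K : Type*) [Field K] :
    vNumber (C.edgeIdeal K) ≤ C.idomNum := by
  by_cases h : C.Stable ∅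
  · obtain ⟨A, hA, hcard⟩ := C.exists_maximalStable_card_eq_idomNum h
    exact hcard ▸ C.vNumber_edgeIdeal_le_card K hA
  · rw [C.edgeIdeal_eq_top_of_not_stable_empty K h, vNumber_top]
    exact Nat.zero_le _

end Clutter

theorem vNumber_le_idomNum_le_indepNum_general {K : Type*} [Field K] {s : ℕ}
    (C : Clutter s) :
    vNumber (C.edgeIdeal K) ≤ C.idomNum ∧ C.idomNum ≤ C.indepNum :=
  ⟨C.vNumber_edgeIdeal_le_idomNum K, C.idomNum_le_indepNum⟩

/-- If the edge ideal of a clutter `C` is not prime, then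
`v(I(C)) ≤ i(C) ≤ β₀(C)`. -/
theorem vNumber_le_idomNum_le_indepNum {K : Type*} [Field K] {s : ℕ}
    (C : Clutter s) (hI : ¬ (C.edgeIdeal K).IsPrime) :
    vNumber (C.edgeIdeal K) ≤ C.idomNum ∧ C.idomNum ≤ C.indepNum :=
  vNumber_le_idomNum_le_indepNum_general C
end

section
/- Let C be a clutter with E(C) ≠ ∅ whose edges are all nonempty, and let I_c(C) ⊆ S be its ideal of covers, the ideal generated by the monomials ∏_{t_i ∈ c} t_i over the minimal vertex covers c of C. Then α_0(C) − 1 ≤ v(I_c(C)), where α_0(C) is the minimum cardinality of a vertex cover of C. -/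
open MvPolynomial

attribute [local instance] Classical.propDecidable

section AuxLemmas

open Finset in
lemma Finsupp.degree_add' {σ : Type*} (a b : σ →₀ ℕ) :
    (a + b).degree = a.degree + b.degree := by
  simp [Finsupp.degree_eq_weight_one, map_add]

namespace VAux

variable {K : Type*} [Field K] {s : ℕ}

/-- Exponent finsupp of a squarefree monomial. -/
noncomputable def expSet (B : Finset (Fin s)) : Fin s →₀ ℕ := ∑ i ∈ B, Finsupp.single i 1

lemma prodX_eq (B : Finset (Fin s)) :
    (∏ i ∈ B, X i : MvPolynomial (Fin s) K) = monomial (expSet B) 1 := by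
  classical
  induction B using Finset.induction_on with
  | empty => simp [expSet, monomial_zero']
  | insert a B' h ih =>
      have hX : (X a : MvPolynomial (Fin s) K) = monomial (Finsupp.single a 1) 1 := rfl
      rw [Finset.prod_insert h, ih, hX, monomial_mul, one_mul]
      congr 1
      rw [expSet, expSet, Finset.sum_insert h]

lemma expSet_apply (B : Finset (Fin s)) (j : Fin s) :
    expSet B j = if j ∈ B then 1 else 0 := by
  classical
  rw [expSet, Finset.sum_apply']
  simp [Finsupp.single_apply]

lemma degree_expSet (B : Finset (Fin s)) : (expSet B).degree = B.card := by
  classical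
  induction B using Finset.induction_on with
  | empty => simp [expSet]
  | insert a B' h ih =>
      rw [expSet, Finset.sum_insert h, Finsupp.degree_add', Finset.card_insert_of_notMem h]
      rw [expSet] at ih
      rw [ih]
      have : (Finsupp.single a 1 : Fin s →₀ ℕ).degree = 1 := by
        exact Finsupp.degree_single a 1
      omega

lemma mem_span_monomials {𝒮 : Set (Finset (Fin s))} {a : Fin s →₀ ℕ}
    (h : monomial a (1 : K) ∈ Ideal.span ((fun B : Finset (Fin s) => ∏ i ∈ B, X i) '' 𝒮)) :
    ∃ B ∈ 𝒮, expSet B ≤ a := by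
  classical
  by_contra hn
  push_neg at hn
  rw [Ideal.span, Submodule.mem_span_set] at h
  obtain ⟨c, hc, hsum⟩ := h
  have h0 : ∀ m ∈ c.support, MvPolynomial.coeff a (c m • m) = 0 := by
    intro m hm
    obtain ⟨B, hB, rfl⟩ := hc hm
    dsimp only
    rw [smul_eq_mul, prodX_eq, coeff_mul_monomial']
    rw [if_neg]
    · exact fun hle => (hn B hB) hle
  have := congrArg (MvPolynomial.coeff a) hsum
  rw [Finsupp.sum, coeff_sum, Finset.sum_eq_zero h0] at this
  rw [coeff_monomial, if_pos rfl] at this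
  exact one_ne_zero this.symm

end VAux

end AuxLemmas
namespace VAux

lemma univ_cover {s : ℕ} (C : Clutter s) (hne : ∀ e ∈ C.edges, e.Nonempty) :
    C.IsVertexCover Finset.univ := by
  intro e he
  obtain ⟨i, hi⟩ := hne e he
  exact ⟨i, hi, Finset.mem_univ i⟩

lemma exists_minimal_aux {s : ℕ} (C : Clutter s) :
    ∀ n (A : Finset (Fin s)), A.card ≤ n → C.IsVertexCover A →
      ∃ B, B ⊆ A ∧ C.IsMinimalVertexCover B := by
  intro n
  induction n with
  | zero =>
      intro A hA hc
      exact ⟨A, subset_rfl, hc, fun B' hB' => absurd hB'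
        (by
          have : A = ∅ := Finset.card_eq_zero.mp (Nat.le_antisymm hA (Nat.zero_le _))
          subst this
          exact Finset.not_ssubset_empty B')⟩
  | succ n ih =>
      intro A hcard hc
      by_cases h : ∀ B' ⊂ A, ¬ C.IsVertexCover B'
      · exact ⟨A, subset_rfl, hc, h⟩
      · push_neg at h
        obtain ⟨B', hB'sub, hB'c⟩ := h
        have hlt : B'.card < A.card := Finset.card_lt_card hB'sub
        obtain ⟨B, hBs, hBmin⟩ := ih B' (by omega) hB'c
        exact ⟨B, hBs.trans hB'sub.subset, hBmin⟩

lemma exists_minimal {s : ℕ} (C : Clutter s) (A : Finset (Fin s)) (hA : C.IsVertexCover A) :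
    ∃ B, B ⊆ A ∧ C.IsMinimalVertexCover B :=
  exists_minimal_aux C A.card A le_rfl hA

lemma coverNum_le {s : ℕ} (C : Clutter s) (B : Finset (Fin s)) (hB : C.IsVertexCover B) :
    C.coverNum ≤ B.card :=
  Nat.sInf_le ⟨B, hB, rfl⟩

variable {K : Type*} [Field K] {s : ℕ}

lemma cover_monomial_mem (C : Clutter s) (A : Finset (Fin s)) (hA : C.IsVertexCover A) :
    (∏ i ∈ A, X i : MvPolynomial (Fin s) K) ∈ C.coverIdeal K := by
  classical
  obtain ⟨B, hBA, hBmin⟩ := exists_minimal C A hA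
  rw [← Finset.prod_sdiff hBA]
  exact Ideal.mul_mem_left _ _ (Ideal.subset_span ⟨B, hBmin, rfl⟩)

lemma coverNum_le_degree (C : Clutter s) {g : MvPolynomial (Fin s) K}
    (hg : g ∈ C.coverIdeal K) : ∀ a ∈ g.support, C.coverNum ≤ a.degree := by
  classical
  refine Submodule.span_induction ?_ ?_ ?_ ?_ hg
  · rintro x ⟨B, hB, rfl⟩ a ha
    dsimp only at ha
    rw [prodX_eq, support_monomial, if_neg one_ne_zero, Finset.mem_singleton] at ha
    subst ha
    rw [degree_expSet]
    exact coverNum_le C B hB.1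
  · simp
  · intro x y hx hy ihx ihy a ha
    rcases Finset.mem_union.mp (MvPolynomial.support_add ha) with h | h
    · exact ihx a h
    · exact ihy a h
  · intro r x hx ihx a ha
    rw [smul_eq_mul] at ha
    obtain ⟨b, hb, cexp, hcx, rfl⟩ := Finset.mem_add.mp (MvPolynomial.support_mul r x ha)
    rw [Finsupp.degree_add']
    exact le_add_self.trans (Nat.add_le_add_left (ihx cexp hcx) b.degree) |>.trans le_rfl
      |>.trans le_rfl

end VAux
namespace VAux

variable {K : Type*} [Field K] {s : ℕ}

/-- The evaluation killing the variables of `e`. -/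
noncomputable def psi (K : Type*) [Field K] {s : ℕ} (e : Finset (Fin s)) :
    MvPolynomial (Fin s) K →ₐ[K] MvPolynomial {j : Fin s // j ∉ e} K :=
  aeval (fun i => if h : i ∈ e then 0 else X ⟨i, h⟩)

lemma psi_X_mem (e : Finset (Fin s)) {i : Fin s} (hi : i ∈ e) :
    psi K e (X i) = 0 := by simp [psi, hi]

lemma psi_X_not_mem (e : Finset (Fin s)) {i : Fin s} (hi : i ∉ e) :
    psi K e (X i) = X ⟨i, hi⟩ := by simp [psi, hi]

lemma psi_zero_of_mem_span (e : Finset (Fin s)) {g : MvPolynomial (Fin s) K}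
    (hg : g ∈ Ideal.span (X '' (e : Set (Fin s)))) : psi K e g = 0 := by
  have hle : Ideal.span (X '' (e : Set (Fin s))) ≤ RingHom.ker (psi K e) := by
    rw [Ideal.span_le]
    rintro _ ⟨i, hi, rfl⟩
    exact RingHom.mem_ker.mpr (psi_X_mem e hi)
  exact RingHom.mem_ker.mp (hle hg)

lemma mem_span_of_psi_zero (e : Finset (Fin s)) {g : MvPolynomial (Fin s) K}
    (h : psi K e g = 0) : g ∈ Ideal.span (X '' (e : Set (Fin s))) := by
  have key : ∀ g : MvPolynomial (Fin s) K,
      g - rename Subtype.val (psi K e g) ∈ Ideal.span (X '' (e : Set (Fin s))) := by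
    intro g
    induction g using MvPolynomial.induction_on with
    | C a => simp [psi]
    | add p q hp hq =>
        have : p + q - rename Subtype.val (psi K e (p + q)) =
            (p - rename Subtype.val (psi K e p)) + (q - rename Subtype.val (psi K e q)) := by
          rw [map_add, map_add]; ring
        rw [this]
        exact Ideal.add_mem _ hp hq
    | mul_X p i hp =>
        by_cases hi : i ∈ e
        · rw [map_mul, psi_X_mem e hi, mul_zero, map_zero, sub_zero]
          exact Ideal.mul_mem_left _ p (Ideal.subset_span ⟨i, hi, rfl⟩)
        · rw [map_mul, psi_X_not_mem e hi, map_mul, rename_X]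
          have : p * X i - rename Subtype.val (psi K e p) * X i =
              (p - rename Subtype.val (psi K e p)) * X i := by ring
          rw [this]
          exact Ideal.mul_mem_right _ _ hp
  have := key g
  rwa [h, map_zero, sub_zero] at this

lemma span_isPrime (e : Finset (Fin s)) :
    (Ideal.span (X '' (e : Set (Fin s)) : Set (MvPolynomial (Fin s) K))).IsPrime := by
  have heq : Ideal.span (X '' (e : Set (Fin s)) : Set (MvPolynomial (Fin s) K)) =
      RingHom.ker (psi K e) := by
    apply le_antisymm
    · intro g hg; exact RingHom.mem_ker.mpr (psi_zero_of_mem_span e hg)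
    · intro g hg; exact mem_span_of_psi_zero e (RingHom.mem_ker.mp hg)
  rw [heq]
  exact RingHom.ker_isPrime _

lemma coverIdeal_le_span (C : Clutter s) {e : Finset (Fin s)} (he : e ∈ C.edges) :
    C.coverIdeal K ≤ Ideal.span (X '' (e : Set (Fin s))) := by
  classical
  rw [Clutter.coverIdeal, Ideal.span_le]
  rintro _ ⟨B, hB, rfl⟩
  obtain ⟨i, hie, hiB⟩ := hB.1 e he
  dsimp only
  rw [← Finset.mul_prod_erase B X hiB]
  exact Ideal.mul_mem_right _ _ (Ideal.subset_span ⟨i, hie, rfl⟩)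

lemma insert_compl_cover (C : Clutter s) {e : Finset (Fin s)} (he : e ∈ C.edges)
    {j : Fin s} (hj : j ∈ e) : C.IsVertexCover (insert j eᶜ) := by
  intro e' he'
  by_cases hsub : e' ⊆ e
  · have : e' = e := C.antichain e' he' e he hsub
    exact ⟨j, this ▸ hj, Finset.mem_insert_self _ _⟩
  · obtain ⟨i, hie', hie⟩ := Finset.not_subset.mp hsub
    exact ⟨i, hie', Finset.mem_insert_of_mem (Finset.mem_compl.mpr hie)⟩

lemma colon_eq (C : Clutter s) {e : Finset (Fin s)} (he : e ∈ C.edges) :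
    Submodule.colon (C.coverIdeal K) (Ideal.span {∏ i ∈ eᶜ, X i} : Ideal (MvPolynomial (Fin s) K)) =
      Ideal.span (X '' (e : Set (Fin s))) := by
  classical
  apply le_antisymm
  · intro g hg
    have hgf : g * (∏ i ∈ eᶜ, X i) ∈ C.coverIdeal K :=
      Ideal.mem_colon_span_singleton.mp hg
    apply mem_span_of_psi_zero
    have h0 : psi K e (g * ∏ i ∈ eᶜ, X i) = 0 :=
      psi_zero_of_mem_span e (coverIdeal_le_span C he hgf)
    rw [map_mul] at h0
    have hfne : psi K e (∏ i ∈ eᶜ, X i) ≠ 0 := by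
      rw [map_prod]
      refine Finset.prod_ne_zero_iff.mpr fun i hi => ?_
      rw [psi_X_not_mem e (Finset.mem_compl.mp hi)]
      exact MvPolynomial.X_ne_zero _
    exact (mul_eq_zero.mp h0).resolve_right hfne
  · rw [Ideal.span_le]
    rintro _ ⟨j, hj, rfl⟩
    have hj' : j ∈ e := hj
    refine Ideal.mem_colon_span_singleton.mpr ?_
    have hjc : j ∉ eᶜ := by simp [hj']
    have : X j * ∏ i ∈ eᶜ, X i = ∏ i ∈ insert j eᶜ, (X i : MvPolynomial (Fin s) K) :=
      (Finset.prod_insert hjc).symm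
    rw [this]
    exact cover_monomial_mem C _ (insert_compl_cover C he hj')

lemma annihilator_eq_colon {R : Type*} [CommRing R] (I : Ideal R) (f : R) :
    (Submodule.span R {Ideal.Quotient.mk I f} : Submodule R (R ⧸ I)).annihilator =
      Submodule.colon I (Ideal.span {f}) := by
  ext r
  rw [Submodule.mem_annihilator_span_singleton, Ideal.mem_colon_span_singleton]
  have h1 : r • (Ideal.Quotient.mk I f) = Ideal.Quotient.mk I (r * f) := by
    rw [← smul_eq_mul]
    exact rfl
  rw [h1, Ideal.Quotient.eq_zero_iff_mem]

end VAux
namespace VAux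

variable {K : Type*} [Field K] {s : ℕ}

lemma prod_X_isHomogeneous (A : Finset (Fin s)) :
    (∏ i ∈ A, X i : MvPolynomial (Fin s) K).IsHomogeneous A.card := by
  have h := MvPolynomial.IsHomogeneous.prod A (fun i => (X i : MvPolynomial (Fin s) K))
    (fun _ => 1) (fun i _ => MvPolynomial.isHomogeneous_X K i)
  simpa using h

lemma bound (C : Clutter s) (hne : ∀ e ∈ C.edges, e.Nonempty)
    {d : ℕ} {f : MvPolynomial (Fin s) K} (hf : f.IsHomogeneous d)
    {p : Ideal (MvPolynomial (Fin s) K)}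
    (hp : p ∈ associatedPrimes (MvPolynomial (Fin s) K)
      (MvPolynomial (Fin s) K ⧸ C.coverIdeal K))
    (hc : Submodule.colon (C.coverIdeal K) (Ideal.span {f}) = p) :
    C.coverNum ≤ d + 1 := by
  classical
  have hprime : p.IsPrime := hp.isPrime
  have hf0 : f ≠ 0 := by
    rintro rfl
    apply hprime.ne_top
    rw [← hc, eq_top_iff]
    intro g _
    refine Ideal.mem_colon_span_singleton.mpr ?_
    simp
  have hIp : C.coverIdeal K ≤ p := by
    rw [← hc]
    intro g hg
    exact Ideal.mem_colon_span_singleton.mpr (Ideal.mul_mem_right f _ hg)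
  obtain ⟨B₀, -, hB₀⟩ := exists_minimal C Finset.univ (univ_cover C hne)
  have hmB₀ : (∏ i ∈ B₀, X i : MvPolynomial (Fin s) K) ∈ p :=
    hIp (Ideal.subset_span ⟨B₀, hB₀, rfl⟩)
  obtain ⟨i, -, hXi⟩ := (Ideal.IsPrime.prod_mem_iff (hp := hprime)).mp hmB₀
  have hXif : X i * f ∈ C.coverIdeal K := by
    rw [← hc] at hXi
    exact Ideal.mem_colon_span_singleton.mp hXi
  have hXif0 : (X i * f : MvPolynomial (Fin s) K) ≠ 0 :=
    mul_ne_zero (MvPolynomial.X_ne_zero _) hf0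
  have hhom : (X i * f : MvPolynomial (Fin s) K).IsHomogeneous (1 + d) :=
    (MvPolynomial.isHomogeneous_X K i).mul hf
  obtain ⟨a, ha⟩ := MvPolynomial.support_nonempty.mpr hXif0
  have h1 := coverNum_le_degree C hXif a ha
  have h2 : a.degree = 1 + d := by
    have := hhom (MvPolynomial.mem_support_iff.mp ha)
    rw [Finsupp.degree_eq_weight_one]
    exact this
  omega

lemma coverIdeal_of_univ_mem (C : Clutter s) (hu : Finset.univ ∈ C.edges)
    (h0 : (Finset.univ : Finset (Fin s)).Nonempty) :
    C.coverIdeal K = Ideal.span (Set.range (X : Fin s → MvPolynomial (Fin s) K)) := by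
  classical
  rw [Clutter.coverIdeal]
  congr 1
  ext m
  constructor
  · rintro ⟨B, hB, rfl⟩
    obtain ⟨i, -, hiB⟩ := hB.1 Finset.univ hu
    have hcov : C.IsVertexCover {i} := by
      intro e' he'
      have : e' = Finset.univ := C.antichain e' he' Finset.univ hu (Finset.subset_univ _)
      exact ⟨i, this ▸ Finset.mem_univ i, Finset.mem_singleton_self i⟩
    have hBi : ({i} : Finset (Fin s)) = B := by
      by_contra hne'
      exact hB.2 {i} ((Finset.singleton_subset_iff.mpr hiB).ssubset_of_ne hne') hcov
    rw [← hBi]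
    exact ⟨i, by simp⟩
  · rintro ⟨i, rfl⟩
    refine ⟨{i}, ⟨?_, ?_⟩, by simp⟩
    · intro e' he'
      have : e' = Finset.univ := C.antichain e' he' Finset.univ hu (Finset.subset_univ _)
      exact ⟨i, this ▸ Finset.mem_univ i, Finset.mem_singleton_self i⟩
    · intro B' hB' hcov
      have hB'e : B' = ∅ := by
        have := Finset.eq_empty_of_ssubset_singleton hB'
        exact this
      obtain ⟨j, -, hj⟩ := hcov Finset.univ hu
      simp [hB'e] at hj

end VAux

/-- For a clutter `C` with at least one edge, all of whose edges are nonempty,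
`α₀(C) − 1 ≤ v(I_c(C))` for the ideal of covers `I_c(C)`. -/
theorem coverNum_sub_one_le_vNumber_coverIdeal {K : Type*} [Field K] {s : ℕ}
    (C : Clutter s) (hE : C.edges.Nonempty) (hne : ∀ e ∈ C.edges, e.Nonempty) :
    C.coverNum - 1 ≤ vNumber (C.coverIdeal K) := by
  classical
  by_cases hI : C.coverIdeal K = Ideal.span (Set.range (X : Fin s → MvPolynomial (Fin s) K))
  · unfold vNumber
    rw [if_pos hI]
    obtain ⟨e, he⟩ := hE
    obtain ⟨i₀, hi₀⟩ := hne e he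
    have hXmem : (X i₀ : MvPolynomial (Fin s) K) ∈ C.coverIdeal K := by
      rw [hI]; exact Ideal.subset_span ⟨i₀, rfl⟩
    have hmono : (monomial (VAux.expSet {i₀}) (1 : K)) ∈
        Ideal.span ((fun B : Finset (Fin s) => ∏ i ∈ B, X i) ''
          {B | C.IsMinimalVertexCover B}) := by
      rw [← VAux.prodX_eq, Finset.prod_singleton, ← Clutter.coverIdeal]
      exact hXmem
    obtain ⟨B, hB, hle⟩ := VAux.mem_span_monomials hmono
    have hsub : B ⊆ {i₀} := by
      intro j hj
      have h1 := (Finsupp.le_def.mp hle) j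
      rw [VAux.expSet_apply, VAux.expSet_apply, if_pos hj] at h1
      by_contra hj'
      rw [if_neg hj'] at h1
      omega
    have hc1 : C.coverNum ≤ B.card := VAux.coverNum_le C B hB.1
    have hc2 : B.card ≤ 1 := by
      have := Finset.card_le_card hsub
      simpa using this
    omega
  · unfold vNumber
    rw [if_neg hI]
    obtain ⟨e, he⟩ := hE
    have h0 : (Finset.univ : Finset (Fin s)).Nonempty := by
      obtain ⟨i, _⟩ := hne e he; exact ⟨i, Finset.mem_univ i⟩
    have heu : e ≠ Finset.univ := by
      rintro rfl
      exact hI (VAux.coverIdeal_of_univ_mem C he h0)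
    have hd₀ : 1 ≤ eᶜ.card := by
      rw [Nat.one_le_iff_ne_zero, Ne, Finset.card_eq_zero]
      intro h
      apply heu
      rwa [Finset.compl_eq_empty_iff] at h
    have hmem : eᶜ.card ∈ {d : ℕ | 1 ≤ d ∧ ∃ f : MvPolynomial (Fin s) K,
        f.IsHomogeneous d ∧
        ∃ p ∈ associatedPrimes (MvPolynomial (Fin s) K)
          (MvPolynomial (Fin s) K ⧸ C.coverIdeal K),
          Submodule.colon (C.coverIdeal K) (Ideal.span {f}) = p} := by
      refine ⟨hd₀, ∏ i ∈ eᶜ, X i, VAux.prod_X_isHomogeneous eᶜ,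
        Ideal.span (X '' (e : Set (Fin s))), ?_, VAux.colon_eq C he⟩
      refine (isAssociatedPrime_iff ..).mpr ⟨VAux.span_isPrime e,
        ⟨Ideal.Quotient.mk _ (∏ i ∈ eᶜ, X i), ?_⟩⟩
      rw [Submodule.bot_colon']
      exact ((VAux.annihilator_eq_colon (C.coverIdeal K) _).trans
        (VAux.colon_eq C he)).symm
    have hsinf := Nat.sInf_mem ⟨_, hmem⟩
    obtain ⟨h1, f, hf, p, hp, hcolon⟩ := hsinf
    have hb := VAux.bound C hne hf hp hcolon
    omega
end

section
/- Let G be a finite simple graph without isolated vertices and with at least one vertex. Then G belongs to class W_2 if and only if G is well-covered and F_G = A_G. -/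
open MvPolynomial

attribute [local instance] Classical.propDecidable

/-!
A stable set `A` is maximal iff it dominates, i.e. `N(A) = Aᶜ`; then `N(A)` is a minimal vertex
cover. So `ℱ_G ⊆ 𝒜_G` always, and `ℱ_G = 𝒜_G` says exactly that a stable set whose neighbor set
is a vertex cover is maximal.

If `G ∈ W₂`, extending the pair `A`, `∅` shows well-coveredness. If `N(A)` is a cover but some
`v ∉ A ∪ N(A)`, extend `A` and `{v}` to disjoint maximum stable sets `A' ⊇ A` and `B' ∋ v`;
then `N(A) ⊊ N(A')`, contradicting the minimality of the cover `N(A')`.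

Conversely, given disjoint stable `A`, `B`, take `A' ⊇ A` maximal among the stable sets disjoint
from `B`. Any edge missed by `N(A')` has both ends outside `A' ∪ N(A')`, hence in `B`, which is
impossible; so `N(A')` is a cover, and `A'` is maximal, hence maximum by well-coveredness. Doing this
first for `B` against `A`, then for `A` against the result, gives the two disjoint maximum sets.
-/

section StableSets

variable {V : Type*} [Fintype V] {G : SimpleGraph V}

lemma mem_gNeighborSet {A : Finset V} {i : V} :
    i ∈ gNeighborSet G A ↔ ∃ j ∈ A, G.Adj i j := by
  simp [gNeighborSet]

lemma gNeighborSet_mono {A B : Finset V} (h : A ⊆ B) : gNeighborSet G A ⊆ gNeighborSet G B :=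
  fun _ hi ↦
    let ⟨j, hj, hadj⟩ := mem_gNeighborSet.mp hi
    mem_gNeighborSet.mpr ⟨j, h hj, hadj⟩

lemma gStable.notMem_gNeighborSet {A : Finset V} (hA : gStable G A) {a : V} (ha : a ∈ A) :
    a ∉ gNeighborSet G A := fun h ↦
  let ⟨j, hj, hadj⟩ := mem_gNeighborSet.mp h
  hA a ha j hj hadj

lemma gStable.insert {A : Finset V} (hA : gStable G A) {v : V} (hv : v ∉ gNeighborSet G A) :
    gStable G (insert v A) := by
  have hv' : ∀ j ∈ A, ¬ G.Adj v j := fun j hj hadj ↦ hv (mem_gNeighborSet.mpr ⟨j, hj, hadj⟩)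
  simp only [gStable, Finset.mem_insert, forall_eq_or_imp, G.irrefl, not_false_eq_true,
    true_and]
  exact ⟨hv', fun i hi ↦ ⟨fun hadj ↦ hv' i hi hadj.symm, hA i hi⟩⟩

lemma gStable.card_le_gIndepNum {A : Finset V} (hA : gStable G A) : A.card ≤ gIndepNum G := by
  refine le_csSup ⟨Fintype.card V, ?_⟩ ⟨A, hA, rfl⟩
  rintro n ⟨B, -, rfl⟩
  exact Finset.card_le_univ B

lemma gMaximumStable.gMaximalStable {A : Finset V} (h : gMaximumStable G A) :
    gMaximalStable G A :=
  ⟨h.1, fun _ hB hAB ↦ Finset.eq_of_subset_of_card_le hAB (h.2 ▸ hB.card_le_gIndepNum)⟩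

lemma gStable.isMinimalVertexCover_gNeighborSet {A : Finset V} (hA : gStable G A)
    (hc : gIsVertexCover G (gNeighborSet G A)) :
    gIsMinimalVertexCover G (gNeighborSet G A) := by
  refine ⟨hc, fun B hB hcov ↦ ?_⟩
  obtain ⟨u, hu, huB⟩ := Finset.exists_of_ssubset hB
  obtain ⟨a, ha, hadj⟩ := mem_gNeighborSet.mp hu
  -- the edge `ua` must be covered by `a ∈ A`, but `A` avoids its own neighbor set
  exact (hcov u a hadj).elim huB fun haB ↦ hA.notMem_gNeighborSet ha (hB.1 haB)

lemma gMaximalStable.gNeighborSet_eq_compl {A : Finset V} (h : gMaximalStable G A) :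
    gNeighborSet G A = Aᶜ := by
  ext i
  rw [Finset.mem_compl]
  refine ⟨fun hi hiA ↦ h.1.notMem_gNeighborSet hiA hi, fun hiA ↦ ?_⟩
  by_contra hiN
  exact hiA (h.2 _ (h.1.insert hiN) (Finset.subset_insert i A) ▸ Finset.mem_insert_self i A)

lemma gMaximalStable.isMinimalVertexCover_gNeighborSet {A : Finset V} (h : gMaximalStable G A) :
    gIsMinimalVertexCover G (gNeighborSet G A) := by
  refine h.1.isMinimalVertexCover_gNeighborSet fun i j hadj ↦ ?_
  rw [h.gNeighborSet_eq_compl, Finset.mem_compl, Finset.mem_compl, ← not_and_or]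
  exact fun hij ↦ h.1 i hij.1 j hij.2 hadj

lemma setOf_gMaximalStable_eq_iff :
    {A : Finset V | gMaximalStable G A} =
        {A : Finset V | gStable G A ∧ gIsMinimalVertexCover G (gNeighborSet G A)} ↔
      ∀ A : Finset V, gStable G A → gIsVertexCover G (gNeighborSet G A) → gMaximalStable G A := by
  refine ⟨fun h A hA hc ↦ ?_, fun h ↦ ?_⟩
  · have hA' : A ∈ {A : Finset V | gStable G A ∧ gIsMinimalVertexCover G (gNeighborSet G A)} :=
      ⟨hA, hA.isMinimalVertexCover_gNeighborSet hc⟩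
    rwa [← h] at hA'
  · ext A
    exact ⟨fun hA ↦ ⟨hA.1, hA.isMinimalVertexCover_gNeighborSet⟩, fun hA ↦ h A hA.1 hA.2.1⟩

lemma gIsVertexCover_gNeighborSet_of_compl_subset {A T : Finset V} (hT : gStable G T)
    (hAT : (A ∪ gNeighborSet G A)ᶜ ⊆ T) :
    gIsVertexCover G (gNeighborSet G A) := by
  intro i j hadj
  by_contra! hij
  have hiA : i ∉ A := fun hi ↦ hij.2 (mem_gNeighborSet.mpr ⟨i, hi, hadj.symm⟩)
  have hjA : j ∉ A := fun hj ↦ hij.1 (mem_gNeighborSet.mpr ⟨j, hj, hadj⟩)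
  exact hT i (hAT (by simp [hiA, hij.1])) j (hAT (by simp [hjA, hij.2])) hadj

lemma exists_gMaximalStable_superset_disjoint
    (hmax : ∀ A : Finset V, gStable G A → gIsVertexCover G (gNeighborSet G A) →
      gMaximalStable G A)
    {A T : Finset V} (hA : gStable G A) (hT : gStable G T) (hd : Disjoint A T) :
    ∃ A' : Finset V, gMaximalStable G A' ∧ A ⊆ A' ∧ Disjoint A' T := by
  obtain ⟨A', hAA', hA'⟩ :=
    Finite.exists_le_maximal (p := fun X : Finset V ↦ gStable G X ∧ Disjoint X T) ⟨hA, hd⟩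
  refine ⟨A', hmax A' hA'.1.1 (gIsVertexCover_gNeighborSet_of_compl_subset hT ?_), hAA', hA'.1.2⟩
  intro v hv
  obtain ⟨hvA', hvN⟩ : v ∉ A' ∧ v ∉ gNeighborSet G A' := by simpa using hv
  by_contra hvT
  have hins : gStable G (insert v A') ∧ Disjoint (insert v A') T :=
    ⟨hA'.1.1.insert hvN, Finset.disjoint_insert_left.mpr ⟨hvT, hA'.1.2⟩⟩
  exact hvA' (hA'.2 hins (Finset.subset_insert v A') (Finset.mem_insert_self v A'))

lemma W2.gWellCovered (hW : W2 G) : gWellCovered G := by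
  intro A hA
  obtain ⟨A', -, hA', -, -, hAA', -⟩ :=
    hW.2 A ∅ hA.1 (by simp [gStable]) (Finset.disjoint_empty_right A)
  rw [hA.2 A' hA'.1 hAA']
  exact hA'.2

lemma W2.gMaximalStable_of_gIsVertexCover (hW : W2 G) {A : Finset V} (hA : gStable G A)
    (hc : gIsVertexCover G (gNeighborSet G A)) : gMaximalStable G A := by
  refine ⟨hA, fun B hB hAB ↦ ?_⟩
  by_contra hne
  obtain ⟨v, hvB, hvA⟩ := Finset.exists_of_ssubset (hAB.ssubset_of_ne hne)
  have hvN : v ∉ gNeighborSet G A := fun hv ↦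
    let ⟨j, hj, hadj⟩ := mem_gNeighborSet.mp hv
    hB v hvB j (hAB hj) hadj
  obtain ⟨A', B', hA', -, hdis, hAA', hvB'⟩ :=
    hW.2 A {v} hA (by simp [gStable]) (Finset.disjoint_singleton_right.mpr hvA)
  have hvA' : v ∉ A' := Finset.disjoint_right.mp hdis (hvB' (Finset.mem_singleton_self v))
  have hssub : gNeighborSet G A ⊂ gNeighborSet G A' := by
    refine Finset.ssubset_iff_subset_ne.mpr ⟨gNeighborSet_mono hAA', fun h ↦ hvN ?_⟩
    rw [h, hA'.gMaximalStable.gNeighborSet_eq_compl]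
    exact Finset.mem_compl.mpr hvA'
  exact hA'.gMaximalStable.isMinimalVertexCover_gNeighborSet.2 _ hssub hc

lemma W2_of_gWellCovered (hcard : 2 ≤ Fintype.card V) (hwc : gWellCovered G)
    (hmax : ∀ A : Finset V, gStable G A → gIsVertexCover G (gNeighborSet G A) →
      gMaximalStable G A) : W2 G := by
  refine ⟨hcard, fun A B hA hB hd ↦ ?_⟩
  obtain ⟨B', hB', hBB', hB'A⟩ := exists_gMaximalStable_superset_disjoint hmax hB hA hd.symm
  obtain ⟨A', hA', hAA', hA'B'⟩ :=
    exists_gMaximalStable_superset_disjoint hmax hA hB'.1 hB'A.symm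
  exact ⟨A', B', ⟨hA'.1, hwc A' hA'⟩, ⟨hB'.1, hwc B' hB'⟩, hA'B', hAA', hBB'⟩

end StableSets

/-- A graph `G` without isolated vertices (with at least one vertex) is in `W₂`
if and only if `G` is well-covered and `ℱ_G = 𝒜_G`. -/
theorem W2_iff_wellCovered_and_F_eq_A {V : Type*} [Fintype V] [Nonempty V]
    (G : SimpleGraph V) (hiso : ∀ v : V, ∃ w : V, G.Adj v w) :
    W2 G ↔ (gWellCovered G ∧
      {A : Finset V | gMaximalStable G A} =
        {A : Finset V | gStable G A ∧ gIsMinimalVertexCover G (gNeighborSet G A)}) := by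
  rw [setOf_gMaximalStable_eq_iff]
  refine ⟨fun hW ↦ ⟨hW.gWellCovered, fun _ ↦ hW.gMaximalStable_of_gIsVertexCover⟩,
    fun ⟨hwc, hmax⟩ ↦ W2_of_gWellCovered ?_ hwc hmax⟩
  obtain ⟨v⟩ := ‹Nonempty V›
  obtain ⟨w, hvw⟩ := hiso v
  exact Fintype.one_lt_card_iff.mpr ⟨v, w, hvw.ne⟩
end
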